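/- Test-norm bound for the composition of two AOTI kernels (used for I₂ in the proof of Theorem 3.3). Let ε₁∈(0,1], ε₂>0 and A>0. For k,ℓ∈ℤ with k≥ℓ, let S:X×X→ℂ and T:X×X→ℂ be measurable kernels satisfying, at scales 2^{-k} and 2^{-ℓ} respectively: the size bound |S(x,y)| ≤ A[V_{2^{-k}}(x)+V(x,y)]⁻¹(2^{-k}/(2^{-k}+d(x,y)))^{ε₂} (and the same for T at scale 2^{-ℓ}); the ε₁-Hölder regularity in each variable at the respective scale (conditions (ii),(iii) of Definition 2.1); and the normalization ∫_X S(x,z)dμ(z)=1=∫_X S(z,y)dμ(z) and likewise for T. Let ε∈(0,min(ε₁,ε₂)) and define U(x,y)=∫_X S(x,z)T(z,y)dμ(z). Then there exists a constant C>0, depending only on A, ε, ε₁, ε₂ and the doubling constants (in particular independent of k, ℓ and x), such that for every x∈X, ‖U(x,·)‖_{G(x,2^{-ℓ},ε,ε)} ≤ C. -/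

import Mathlib

open MeasureTheory Metric Set Filter
open scoped ENNReal NNReal Topology

namespace RDHardy

variable {X : Type*} [MetricSpace X] [MeasurableSpace X] [BorelSpace X]

/-- The measure of the ball `B(x,r)` as a real number: `V_r(x)`. -/
noncomputable def vol (μ : Measure X) (x : X) (r : ℝ) : ℝ := (μ (ball x r)).toReal

/-- Every ball has finite and positive measure. -/
def BallsFinitePos (μ : Measure X) : Prop :=
  ∀ (x : X) (r : ℝ), 0 < r → 0 < μ (ball x r) ∧ μ (ball x r) < ∞

/-- The doubling property `μ(B(x, λ r)) ≤ C₁ λ^n μ(B(x,r))`. -/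
def Doubling (μ : Measure X) (C₁ n : ℝ) : Prop :=
  ∀ (x : X) (l r : ℝ), 1 ≤ l → 0 < r →
    μ (ball x (l * r)) ≤ ENNReal.ofReal (C₁ * l ^ n) * μ (ball x r)

/-- The reverse doubling property `μ(B(x, C₂ r)) ≥ C₃ μ(B(x,r))` for `0 < r < diam X`. -/
def ReverseDoubling (μ : Measure X) (C₂ C₃ : ℝ) : Prop :=
  ∀ (x : X) (r : ℝ), 0 < r → ENNReal.ofReal r < EMetric.diam (univ : Set X) →
    ENNReal.ofReal C₃ * μ (ball x r) ≤ μ (ball x (C₂ * r))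

/-- An RD-space with `μ(X) = ∞`: doubling, all balls of finite positive measure,
reverse doubling, infinite total measure. -/
structure IsRD (μ : Measure X) (C₁ n C₂ C₃ : ℝ) : Prop where
  one_le_C₁ : 1 ≤ C₁
  n_pos : 0 < n
  balls : BallsFinitePos μ
  doubling : Doubling μ C₁ n
  one_lt_C₂ : 1 < C₂
  one_lt_C₃ : 1 < C₃
  rev : ReverseDoubling μ C₂ C₃
  infinite : μ univ = ∞

/-- The scale `2^{-k}`. -/
noncomputable def sc (k : ℤ) : ℝ := (2 : ℝ) ^ (-k)

/-- The standard size majorant `[V_r(x)+V(x,y)]⁻¹ (r/(r+d(x,y)))^γ`. -/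
noncomputable def sz (μ : Measure X) (x y : X) (r γ : ℝ) : ℝ :=
  (vol μ x r + vol μ x (dist x y))⁻¹ * (r / (r + dist x y)) ^ γ

/-- An `(ε₁, ε₂, ε₃)`-approximation of the identity with constant `C₄`. -/
structure IsAOTI (μ : Measure X) (C₄ ε₁ ε₂ ε₃ : ℝ) (S : ℤ → X → X → ℂ) : Prop where
  meas : ∀ k, Measurable (Function.uncurry (S k))
  size : ∀ (k : ℤ) (x y : X), ‖S k x y‖ ≤ C₄ * sz μ x y (sc k) ε₂
  holder_fst : ∀ (k : ℤ) (x x' y : X), dist x x' ≤ (sc k + dist x y) / 2 →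
    ‖S k x y - S k x' y‖ ≤ C₄ * (dist x x' / (sc k + dist x y)) ^ ε₁ * sz μ x y (sc k) ε₂
  holder_snd : ∀ (k : ℤ) (x y y' : X), dist y y' ≤ (sc k + dist x y) / 2 →
    ‖S k x y - S k x y'‖ ≤ C₄ * (dist y y' / (sc k + dist x y)) ^ ε₁ * sz μ x y (sc k) ε₂
  second_diff : ∀ (k : ℤ) (x x' y y' : X), dist x x' ≤ (sc k + dist x y) / 3 →
    dist y y' ≤ (sc k + dist x y) / 3 →
    ‖S k x y - S k x y' - (S k x' y - S k x' y')‖ ≤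
      C₄ * (dist x x' / (sc k + dist x y)) ^ ε₁ * (dist y y' / (sc k + dist x y)) ^ ε₁ *
        sz μ x y (sc k) ε₃
  int_fst : ∀ (k : ℤ) (y : X), ∫ z, S k z y ∂μ = 1
  int_snd : ∀ (k : ℤ) (x : X), ∫ z, S k x z ∂μ = 1

/-- `S_k(f)(x) = ∫ S_k(x,y) f(y) dμ(y)`. -/
noncomputable def Sop (μ : Measure X) (S : ℤ → X → X → ℂ) (k : ℤ) (f : X → ℂ) (x : X) : ℂ :=
  ∫ y, S k x y * f y ∂μ

/-- The radial maximal function `S⁺(f)(x) = sup_{k∈ℤ} |S_k(f)(x)|`. -/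
noncomputable def radialMax (μ : Measure X) (S : ℤ → X → X → ℂ) (f : X → ℂ) (x : X) : ℝ≥0∞ :=
  ⨆ k : ℤ, ENNReal.ofReal ‖Sop μ S k f x‖

/-- The localized radial maximal function `S⁺_ℓ(f)(x) = sup_{k ≥ ℓ} |S_k(f)(x)|`. -/
noncomputable def radialMaxLoc (μ : Measure X) (S : ℤ → X → X → ℂ) (ℓ : ℤ) (f : X → ℂ)
    (x : X) : ℝ≥0∞ :=
  ⨆ (k : ℤ) (_ : ℓ ≤ k), ENNReal.ofReal ‖Sop μ S k f x‖

/-- `S_k^{(a)}(f)(x) = V_{a 2^{-k}}(x)⁻¹ ∫_{B(x, a 2^{-k})} |S_k(f)(y)| dμ(y)`. -/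
noncomputable def radialAvg (μ : Measure X) (S : ℤ → X → X → ℂ) (a : ℝ) (k : ℤ) (f : X → ℂ)
    (x : X) : ℝ≥0∞ :=
  (μ (ball x (a * sc k)))⁻¹ *
    ∫⁻ y in ball x (a * sc k), ENNReal.ofReal ‖Sop μ S k f y‖ ∂μ

/-- `TestBound μ x r β γ φ C` says that `‖φ‖_{G(x,r,β,γ)} ≤ C`, i.e. `C` is an admissible
constant in the size and regularity conditions defining the space of test functions. -/
def TestBound (μ : Measure X) (x : X) (r β γ : ℝ) (φ : X → ℂ) (C : ℝ) : Prop :=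
  (∀ y : X, ‖φ y‖ ≤ C * sz μ x y r γ) ∧
  ∀ y y' : X, dist y y' ≤ (r + dist x y) / 2 →
    ‖φ y - φ y'‖ ≤ C * (dist y y' / (r + dist x y)) ^ β * sz μ x y r γ

/-- The grand maximal function `G(f)(x)`. -/
noncomputable def grandMax (μ : Measure X) (ε β γ : ℝ) (f : X → ℂ) (x : X) : ℝ≥0∞ :=
  ⨆ (r : ℝ) (_ : 0 < r) (φ : X → ℂ)
    (_ : ∃ C : ℝ, 0 ≤ C ∧ TestBound μ x r ε ε φ C) (_ : TestBound μ x r β γ φ 1),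
    ENNReal.ofReal ‖∫ z, f z * φ z ∂μ‖

/-- The localized grand maximal function `G_ℓ(f)(x)` (radii restricted to `(0, 2^{-ℓ}]`). -/
noncomputable def grandMaxLoc (μ : Measure X) (ε β γ : ℝ) (ℓ : ℤ) (f : X → ℂ)
    (x : X) : ℝ≥0∞ :=
  ⨆ (r : ℝ) (_ : 0 < r ∧ r ≤ sc ℓ) (φ : X → ℂ)
    (_ : ∃ C : ℝ, 0 ≤ C ∧ TestBound μ x r ε ε φ C) (_ : TestBound μ x r β γ φ 1),
    ENNReal.ofReal ‖∫ z, f z * φ z ∂μ‖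

/-- `L^p` quasi-norm (with `0 < p ≤ 1`) of an `ℝ≥0∞`-valued function. -/
noncomputable def lpNorm (μ : Measure X) (p : ℝ) (g : X → ℝ≥0∞) : ℝ≥0∞ :=
  (∫⁻ x, g x ^ p ∂μ) ^ (1 / p)

/-- The Hardy–Littlewood maximal function of an `ℝ≥0∞`-valued function. -/
noncomputable def HL (μ : Measure X) (g : X → ℝ≥0∞) (x : X) : ℝ≥0∞ :=
  ⨆ (r : ℝ) (_ : 0 < r), (μ (ball x r))⁻¹ * ∫⁻ y in ball x r, g y ∂μ

end RDHardy

/-!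
Write `a = 2^{-k} ≤ b = 2^{-ℓ}` and `P_r(p, z) = V_{r + d(p,z)}(p)⁻¹ (r / (r + d(p,z)))^γ`, which is
comparable to the size majorant. By doubling, `∫ P_r(p, ·) dμ` is bounded uniformly in `p` and `r`
(sum over dyadic annuli), and `∫ P_a(x, z) P_b(y, z) dμ(z) ≲ P_b(x, y)` (for each `z` one of the
two factors is `≲ P_b(x, y)`); the size bound of `U(x, ·)` follows.

For the regularity in `y`, with `h = d(y, y')`, the Hölder and size bounds of `T` give
`|T(z,y) - T(z,y')| ≲ (h / (b + d(z,y)))^ε (P_b(y, z) + P_b(y', z))`. If `d(x, y) ≤ b` this is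
`≲ (h / b)^ε V_b(y)⁻¹` uniformly in `z` and is integrated against `|S(x, ·)|`. Otherwise
`a + d(x, y)` and `b + d(x, y)` are comparable, and `∫ T(z, y) dμ(z) = ∫ T(z, y') dμ(z)` lets one
replace `S(x, z)` by `S(x, z) - S(x, y)`, which the Hölder regularity of `S` makes small for `z`
near `y` and which the convolution inequality handles for `z` far from `y`.
-/

namespace RDHardy

variable {X : Type*} [MetricSpace X] [MeasurableSpace X] {μ : Measure X} {C₁ n : ℝ}

theorem inv_le_mul_inv_of_le_mul {a b c : ℝ≥0∞} (ha : a ≠ 0) (ha' : a ≠ ∞) (h : a ≤ c * b) :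
    b⁻¹ ≤ c * a⁻¹ := by
  rcases eq_or_ne b ∞ with rfl | hb'
  · simp
  have hb : b ≠ 0 := by rintro rfl; exact ha (by simpa using h)
  rw [← div_eq_mul_inv, ENNReal.le_div_iff_mul_le (.inl ha) (.inl ha'),
    ENNReal.inv_mul_le_iff hb hb', mul_comm]
  exact h

theorem inv_measure_ball_le_of_add_dist_le (hb : BallsFinitePos μ) (hd : Doubling μ C₁ n)
    {x z : X} {s s' K : ℝ} (hs : 0 < s) (hs' : 0 < s') (hK : 1 ≤ K)
    (h : s + dist x z ≤ K * s') :
    (μ (ball z s'))⁻¹ ≤ ENNReal.ofReal (C₁ * K ^ n) * (μ (ball x s))⁻¹ :=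
  inv_le_mul_inv_of_le_mul (hb x s hs).1.ne' (hb x s hs).2.ne
    ((measure_mono (ball_subset_ball' h)).trans (hd z K s' hK hs'))

/-- Comparable to `sz μ p z r γ`, but built on the single ball `B(p, r + d(p,z))`, so that every
comparison by doubling is one step. -/
noncomputable def majorant (μ : Measure X) (p : X) (r γ : ℝ) (z : X) : ℝ≥0∞ :=
  (μ (ball p (r + dist p z)))⁻¹ * ENNReal.ofReal ((r / (r + dist p z)) ^ γ)

theorem measurable_majorant [OpensMeasurableSpace X] (p : X) (r γ : ℝ) :
    Measurable (majorant μ p r γ) := by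
  have hdist : Measurable (dist p) := (continuous_const.dist continuous_id).measurable
  have hball : Measurable fun s : ℝ => μ (ball p s) :=
    Monotone.measurable fun _ _ h => measure_mono (ball_subset_ball h)
  exact (hball.comp (measurable_const.add hdist)).inv.mul
    ((measurable_const.div (measurable_const.add hdist)).pow_const γ).ennreal_ofReal

theorem majorant_le_inv_measure_ball {p z : X} {r γ : ℝ} (hr : 0 < r) (hγ : 0 ≤ γ) :
    majorant μ p r γ z ≤ (μ (ball p r))⁻¹ := by
  have hd := dist_nonneg (x := p) (y := z)
  calc majorant μ p r γ z ≤ (μ (ball p r))⁻¹ * 1 := by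
        refine mul_le_mul' (ENNReal.inv_le_inv.2 (measure_mono (ball_subset_ball (by linarith))))
          (ENNReal.ofReal_le_one.2 (Real.rpow_le_one (by positivity) ?_ hγ))
        exact div_le_one_of_le₀ (by linarith) (by linarith)
    _ = (μ (ball p r))⁻¹ := mul_one _

theorem majorant_le_of_exponent_le {p z : X} {r γ γ' : ℝ} (hr : 0 < r) (hγ : γ ≤ γ') :
    majorant μ p r γ' z ≤ majorant μ p r γ z := by
  have hd := dist_nonneg (x := p) (y := z)
  refine mul_le_mul' le_rfl (ENNReal.ofReal_le_ofReal ?_)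
  exact Real.rpow_le_rpow_of_exponent_ge (by positivity)
    (div_le_one_of_le₀ (by linarith) (by linarith)) hγ

theorem majorant_le_of_le_two_mul (hb : BallsFinitePos μ) (hd : Doubling μ C₁ n)
    {x y z w : X} {r s γ : ℝ} (hr : 0 < r) (hrs : r ≤ s) (hγ : 0 ≤ γ)
    (hxy : dist x y ≤ s + dist x w) (h : s + dist x w ≤ 2 * (r + dist y z)) :
    majorant μ y r γ z ≤
      ENNReal.ofReal (C₁ * 4 ^ n) * ENNReal.ofReal (2 ^ γ) * majorant μ x s γ w := by
  set t := r + dist y z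
  set R := s + dist x w
  have ht : 0 < t := by positivity
  have hs : 0 < s := hr.trans_le hrs
  have hR : 0 < R := by positivity
  have hball : (μ (ball y t))⁻¹ ≤ ENNReal.ofReal (C₁ * 4 ^ n) * (μ (ball x R))⁻¹ :=
    inv_measure_ball_le_of_add_dist_le hb hd hR ht (by norm_num) (by linarith)
  have hratio : (r / t) ^ γ ≤ 2 ^ γ * (s / R) ^ γ := by
    rw [← Real.mul_rpow (by norm_num) (div_nonneg hs.le hR.le), ← mul_div_assoc]
    refine Real.rpow_le_rpow (div_nonneg hr.le ht.le) ((div_le_div_iff₀ ht hR).2 ?_) hγ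
    nlinarith [mul_le_mul hrs h hR.le hs.le]
  calc majorant μ y r γ z
      ≤ (ENNReal.ofReal (C₁ * 4 ^ n) * (μ (ball x R))⁻¹) *
          (ENNReal.ofReal (2 ^ γ) * ENNReal.ofReal ((s / R) ^ γ)) := by
        refine mul_le_mul' hball ?_
        rw [← ENNReal.ofReal_mul (by positivity)]
        exact ENNReal.ofReal_le_ofReal hratio
    _ = _ := by unfold majorant; ring

theorem lintegral_majorant_le [OpensMeasurableSpace X] (hb : BallsFinitePos μ)
    (hd : Doubling μ C₁ n) {γ : ℝ} (hγ : 0 < γ) :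
    ∃ κ : ℝ≥0∞, κ ≠ ∞ ∧ ∀ (p : X) (r : ℝ), 0 < r → ∫⁻ z, majorant μ p r γ z ∂μ ≤ κ := by
  set q := ENNReal.ofReal ((1 / 2 : ℝ) ^ γ)
  have hq : q < 1 := ENNReal.ofReal_lt_one.2 (Real.rpow_lt_one (by norm_num) (by norm_num) hγ)
  refine ⟨ENNReal.ofReal (C₁ * 2 ^ n) * (1 - q)⁻¹,
    ENNReal.mul_ne_top ENNReal.ofReal_ne_top (ENNReal.inv_ne_top.2 (tsub_pos_of_lt hq).ne'), ?_⟩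
  intro p r hr
  -- dyadic domination: `z` lies in the annulus `2^j r ≤ r + d(p,z) < 2^(j+1) r` for some `j`
  have hdom : ∀ z, majorant μ p r γ z ≤ ∑' j : ℕ,
      (ball p (2 ^ (j + 1) * r)).indicator (fun _ => q ^ j * (μ (ball p (2 ^ j * r)))⁻¹) z := by
    intro z
    have hd := dist_nonneg (x := p) (y := z)
    obtain ⟨j, hj, hj'⟩ := exists_nat_pow_near (x := (r + dist p z) / r)
      (by rw [le_div_iff₀ hr]; linarith) one_lt_two
    rw [le_div_iff₀ hr] at hj
    rw [div_lt_iff₀ hr] at hj'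
    refine le_trans ?_ (ENNReal.le_tsum j)
    rw [indicator_of_mem (mem_ball'.2 (by linarith)), mul_comm _ (_⁻¹)]
    refine mul_le_mul' (ENNReal.inv_le_inv.2 (measure_mono (ball_subset_ball hj))) ?_
    rw [← ENNReal.ofReal_pow (by positivity), ← Real.rpow_natCast, ← Real.rpow_mul (by norm_num),
      mul_comm, Real.rpow_mul (by norm_num), Real.rpow_natCast]
    refine ENNReal.ofReal_le_ofReal (Real.rpow_le_rpow (by positivity) ?_ hγ.le)
    rw [div_le_iff₀ (by positivity), one_div_pow, one_div_mul_eq_div, le_div_iff₀ (by positivity)]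
    linarith
  have hterm : ∀ j : ℕ, q ^ j * (μ (ball p (2 ^ j * r)))⁻¹ * μ (ball p (2 ^ (j + 1) * r)) ≤
      ENNReal.ofReal (C₁ * 2 ^ n) * q ^ j := by
    intro j
    have hrj : 0 < 2 ^ j * r := by positivity
    rw [mul_assoc, mul_comm (ENNReal.ofReal _)]
    refine mul_le_mul' le_rfl ?_
    rw [ENNReal.inv_mul_le_iff (hb p _ hrj).1.ne' (hb p _ hrj).2.ne, pow_succ', mul_assoc,
      mul_comm (μ _)]
    exact hd p 2 _ one_le_two hrj
  calc ∫⁻ z, majorant μ p r γ z ∂μ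
      ≤ ∫⁻ z, ∑' j : ℕ, (ball p (2 ^ (j + 1) * r)).indicator
          (fun _ => q ^ j * (μ (ball p (2 ^ j * r)))⁻¹) z ∂μ := lintegral_mono hdom
    _ = ∑' j : ℕ, q ^ j * (μ (ball p (2 ^ j * r)))⁻¹ * μ (ball p (2 ^ (j + 1) * r)) := by
        rw [lintegral_tsum fun j => (measurable_const.indicator measurableSet_ball).aemeasurable]
        simp only [lintegral_indicator_const measurableSet_ball]
    _ ≤ ∑' j : ℕ, ENNReal.ofReal (C₁ * 2 ^ n) * q ^ j := ENNReal.tsum_le_tsum hterm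
    _ = ENNReal.ofReal (C₁ * 2 ^ n) * (1 - q)⁻¹ := by
        rw [ENNReal.tsum_mul_left, ENNReal.tsum_geometric]

theorem sz_nonneg (μ : Measure X) (x y : X) {r : ℝ} (hr : 0 ≤ r) (γ : ℝ) : 0 ≤ sz μ x y r γ :=
  mul_nonneg (inv_nonneg.2 (add_nonneg ENNReal.toReal_nonneg ENNReal.toReal_nonneg))
    (Real.rpow_nonneg (div_nonneg hr (add_nonneg hr dist_nonneg)) γ)

theorem sz_le_inv_vol (hb : BallsFinitePos μ) {x y : X} {r γ : ℝ} (hr : 0 < r) (hγ : 0 ≤ γ) :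
    sz μ x y r γ ≤ (vol μ x r)⁻¹ := by
  have hV : 0 < vol μ x r := ENNReal.toReal_pos (hb x r hr).1.ne' (hb x r hr).2.ne
  have hd := dist_nonneg (x := x) (y := y)
  calc sz μ x y r γ ≤ (vol μ x r)⁻¹ * 1 := by
        refine mul_le_mul (inv_anti₀ hV (le_add_of_nonneg_right ENNReal.toReal_nonneg))
          (Real.rpow_le_one (by positivity) ((div_le_one (by positivity)).2 (by linarith)) hγ)
          (by positivity) (inv_nonneg.2 hV.le)
    _ = (vol μ x r)⁻¹ := mul_one _

theorem ofReal_sz_eq (hb : BallsFinitePos μ) {x y : X} {r : ℝ} (hr : 0 < r) (γ : ℝ) :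
    ENNReal.ofReal (sz μ x y r γ) = (μ (ball x r) + μ (ball x (dist x y)))⁻¹ *
      ENNReal.ofReal ((r / (r + dist x y)) ^ γ) := by
  have hR := (hb x (r + dist x y) (by positivity)).2.ne
  have hr' : μ (ball x r) ≠ ∞ :=
    ne_top_of_le_ne_top hR (measure_mono (ball_subset_ball (by simp)))
  have hd : μ (ball x (dist x y)) ≠ ∞ :=
    ne_top_of_le_ne_top hR (measure_mono (ball_subset_ball (by linarith)))
  have hsum : μ (ball x r) + μ (ball x (dist x y)) ≠ 0 :=
    (add_pos_of_pos_of_nonneg (hb x r hr).1 zero_le).ne'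
  rw [sz, vol, vol, ← ENNReal.toReal_add hr' hd,
    ENNReal.ofReal_mul (inv_nonneg.2 ENNReal.toReal_nonneg), ← ENNReal.toReal_inv,
    ENNReal.ofReal_toReal (ENNReal.inv_ne_top.2 hsum)]

theorem ofReal_sz_le_majorant (hb : BallsFinitePos μ) (hd : Doubling μ C₁ n) {x y : X}
    {r : ℝ} (hr : 0 < r) (γ : ℝ) :
    ENNReal.ofReal (sz μ x y r γ) ≤ ENNReal.ofReal (C₁ * 2 ^ n) * majorant μ x r γ y := by
  have hR : 0 < r + dist x y := by positivity
  have hmax : μ (ball x (max r (dist x y))) ≤ μ (ball x r) + μ (ball x (dist x y)) := by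
    rcases le_total r (dist x y) with h | h
    · rw [max_eq_right h]; exact le_add_self
    · rw [max_eq_left h]; exact le_self_add
  have hdouble : μ (ball x (r + dist x y)) ≤
      ENNReal.ofReal (C₁ * 2 ^ n) * (μ (ball x r) + μ (ball x (dist x y))) := by
    refine le_trans (measure_mono (ball_subset_ball ?_))
      ((hd x 2 _ one_le_two (lt_max_of_lt_left hr)).trans (mul_le_mul' le_rfl hmax))
    linarith [le_max_left r (dist x y), le_max_right r (dist x y)]
  rw [ofReal_sz_eq hb hr, majorant, ← mul_assoc]
  exact mul_le_mul' (inv_le_mul_inv_of_le_mul (hb x _ hR).1.ne' (hb x _ hR).2.ne hdouble) le_rfl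

theorem majorant_le_two_mul_ofReal_sz (hb : BallsFinitePos μ) {x y : X} {r : ℝ} (hr : 0 < r)
    (γ : ℝ) : majorant μ x r γ y ≤ 2 * ENNReal.ofReal (sz μ x y r γ) := by
  have hR := hb x (r + dist x y) (by positivity)
  have hsub : ∀ s ≤ r + dist x y, μ (ball x s) ≤ μ (ball x (r + dist x y)) :=
    fun s hs => measure_mono (ball_subset_ball hs)
  have hsum : μ (ball x r) + μ (ball x (dist x y)) ≤ 2 * μ (ball x (r + dist x y)) := by
    rw [two_mul]
    exact add_le_add (hsub r (by simp)) (hsub _ (by linarith [hr]))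
  rw [ofReal_sz_eq hb hr, majorant, ← mul_assoc]
  refine mul_le_mul' (inv_le_mul_inv_of_le_mul ?_ ?_ hsum) le_rfl
  · exact (add_pos_of_pos_of_nonneg (hb x r hr).1 zero_le).ne'
  · exact ENNReal.add_ne_top.2 ⟨ne_top_of_le_ne_top hR.2.ne (hsub r (by simp)),
      ne_top_of_le_ne_top hR.2.ne (hsub _ (by linarith [hr]))⟩

theorem le_mul_sz_of_ofReal_le (hb : BallsFinitePos μ) {x y : X} {r γ : ℝ} (hr : 0 < r)
    {K : ℝ≥0∞} (hK : K ≠ ∞) {t H C : ℝ} (hH : 0 ≤ H) (hC : 2 * K.toReal ≤ C)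
    (h : ENNReal.ofReal t ≤ K * ENNReal.ofReal H * majorant μ x r γ y) :
    t ≤ C * H * sz μ x y r γ := by
  have hsz := sz_nonneg μ x y hr.le γ
  have h2 : ENNReal.ofReal t ≤ ENNReal.ofReal (2 * K.toReal * H * sz μ x y r γ) := by
    refine h.trans ((mul_le_mul' le_rfl (majorant_le_two_mul_ofReal_sz hb hr γ)).trans_eq ?_)
    rw [ENNReal.ofReal_mul (by positivity), ENNReal.ofReal_mul (by positivity),
      ENNReal.ofReal_mul (by positivity), ENNReal.ofReal_toReal hK, ENNReal.ofReal_ofNat]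
    ring
  exact ((ENNReal.ofReal_le_ofReal_iff (by positivity)).1 h2).trans (by gcongr)

def SizeBound (μ : Measure X) (A r γ : ℝ) (K : X → X → ℂ) : Prop :=
  ∀ x y, ‖K x y‖ ≤ A * sz μ x y r γ

def HolderSndBound (μ : Measure X) (A r β γ : ℝ) (K : X → X → ℂ) : Prop :=
  ∀ x y y', dist y y' ≤ (r + dist x y) / 2 →
    ‖K x y - K x y'‖ ≤ A * (dist y y' / (r + dist x y)) ^ β * sz μ x y r γ

theorem ofReal_mul_sz_le_majorant (hb : BallsFinitePos μ) (hd : Doubling μ C₁ n) (A : ℝ)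
    {x z : X} {r : ℝ} (hr : 0 < r) (γ : ℝ) :
    ENNReal.ofReal (A * sz μ x z r γ) ≤
      ENNReal.ofReal A * ENNReal.ofReal (C₁ * 2 ^ n) * majorant μ x r γ z := by
  rw [ENNReal.ofReal_mul' (sz_nonneg μ x z hr.le γ), mul_assoc]
  exact mul_le_mul' le_rfl (ofReal_sz_le_majorant hb hd hr γ)

theorem ofReal_mul_sz_le_majorant_swap (hb : BallsFinitePos μ) (hd : Doubling μ C₁ n)
    (A : ℝ) {y z : X} {r γ : ℝ} (hr : 0 < r) (hγ : 0 ≤ γ) :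
    ENNReal.ofReal (A * sz μ z y r γ) ≤ ENNReal.ofReal A * ENNReal.ofReal (C₁ * 2 ^ n) *
      (ENNReal.ofReal (C₁ * 4 ^ n) * ENNReal.ofReal (2 ^ γ)) * majorant μ y r γ z := by
  rw [mul_assoc _ (_ * _)]
  refine (ofReal_mul_sz_le_majorant hb hd A hr γ).trans (mul_le_mul' le_rfl ?_)
  refine majorant_le_of_le_two_mul hb hd hr le_rfl hγ (by linarith) ?_
  rw [dist_comm]
  linarith [dist_nonneg (x := z) (y := y)]

/-- Either `d(y,y') ≤ (r + d(z,y))/2` and the Hölder bound applies, or the size bounds at `y`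
and `y'` are already of the claimed order. -/
theorem exists_ofReal_norm_sub_le_majorant (hb : BallsFinitePos μ) (hd : Doubling μ C₁ n)
    {A β γ ε : ℝ} (hA : 0 ≤ A) (hγ : 0 ≤ γ) (hε : 0 ≤ ε) (hεβ : ε ≤ β) :
    ∃ κ : ℝ≥0∞, κ ≠ ∞ ∧ ∀ (r : ℝ) (K : X → X → ℂ), 0 < r → SizeBound μ A r γ K →
      HolderSndBound μ A r β γ K → ∀ z y y' : X,
        ENNReal.ofReal ‖K z y - K z y'‖ ≤ κ * ENNReal.ofReal ((dist y y' / (r + dist z y)) ^ ε) *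
          (majorant μ y r γ z + majorant μ y' r γ z) := by
  set M := ENNReal.ofReal A * ENNReal.ofReal (C₁ * 2 ^ n) *
    (ENNReal.ofReal (C₁ * 4 ^ n) * ENNReal.ofReal (2 ^ γ))
  refine ⟨ENNReal.ofReal (2 ^ ε) * M, by finiteness, ?_⟩
  intro r K hr hsize hhol z y y'
  set t := r + dist z y
  set h := dist y y'
  have ht : 0 < t := by positivity
  have hy := ofReal_mul_sz_le_majorant_swap hb hd A (y := y) (z := z) hr hγ
  have hy' := ofReal_mul_sz_le_majorant_swap hb hd A (y := y') (z := z) hr hγ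
  have hM : ENNReal.ofReal (A * sz μ z y r γ) + ENNReal.ofReal (A * sz μ z y' r γ) ≤
      M * (majorant μ y r γ z + majorant μ y' r γ z) := by
    rw [mul_add]; exact add_le_add hy hy'
  suffices ENNReal.ofReal ‖K z y - K z y'‖ ≤ ENNReal.ofReal (2 ^ ε) *
      ENNReal.ofReal ((h / t) ^ ε) * (M * (majorant μ y r γ z + majorant μ y' r γ z)) from
    this.trans_eq (by ring)
  rcases le_or_gt h (t / 2) with hh | hh
  · have hht : (h / t) ^ β ≤ (h / t) ^ ε := Real.rpow_le_rpow_of_exponent_ge'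
      (by positivity) ((div_le_one ht).2 (by linarith)) hε hεβ
    have hK : ‖K z y - K z y'‖ ≤ (h / t) ^ ε * (A * sz μ z y r γ) :=
      calc ‖K z y - K z y'‖ ≤ A * (h / t) ^ β * sz μ z y r γ := hhol z y y' hh
        _ ≤ A * (h / t) ^ ε * sz μ z y r γ := by gcongr; exact sz_nonneg μ z y hr.le γ
        _ = (h / t) ^ ε * (A * sz μ z y r γ) := by ring
    calc ENNReal.ofReal ‖K z y - K z y'‖
        ≤ 1 * ENNReal.ofReal ((h / t) ^ ε) * ENNReal.ofReal (A * sz μ z y r γ) := by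
          rw [one_mul, ← ENNReal.ofReal_mul (by positivity)]
          exact ENNReal.ofReal_le_ofReal hK
      _ ≤ _ := by
          gcongr
          · exact ENNReal.one_le_ofReal.2 (Real.one_le_rpow one_le_two hε)
          · exact le_self_add.trans hM
  · have h1 : 1 ≤ ENNReal.ofReal (2 ^ ε) * ENNReal.ofReal ((h / t) ^ ε) := by
      rw [← ENNReal.ofReal_mul (by positivity), ← Real.mul_rpow (by norm_num) (by positivity)]
      refine ENNReal.one_le_ofReal.2 (Real.one_le_rpow ?_ hε)
      rw [← mul_div_assoc, le_div_iff₀ ht]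
      linarith
    calc ENNReal.ofReal ‖K z y - K z y'‖
        ≤ 1 * (ENNReal.ofReal (A * sz μ z y r γ) + ENNReal.ofReal (A * sz μ z y' r γ)) := by
          rw [one_mul]
          exact (ENNReal.ofReal_le_ofReal ((norm_sub_le _ _).trans
            (add_le_add (hsize z y) (hsize z y')))).trans ENNReal.ofReal_add_le
      _ ≤ _ := mul_le_mul' h1 hM

theorem exists_lintegral_majorant_mul_majorant_le [OpensMeasurableSpace X]
    (hb : BallsFinitePos μ) (hd : Doubling μ C₁ n) {γ : ℝ} (hγ : 0 < γ) :
    ∃ κ : ℝ≥0∞, κ ≠ ∞ ∧ ∀ (a b : ℝ) (x y : X), 0 < a → a ≤ b →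
      ∫⁻ z, majorant μ x a γ z * majorant μ y b γ z ∂μ ≤ κ * majorant μ x b γ y := by
  obtain ⟨κ₀, hκ₀, hint⟩ := lintegral_majorant_le hb hd hγ
  set c := ENNReal.ofReal (C₁ * 4 ^ n) * ENNReal.ofReal (2 ^ γ)
  refine ⟨c * (κ₀ + κ₀), by finiteness, ?_⟩
  intro a b x y ha hab
  have hb0 : 0 < b := ha.trans_le hab
  set B := c * majorant μ x b γ y
  -- `b + d(x,y) ≤ (a + d(x,z)) + (b + d(y,z))`, so one of the two outer radii is at least half
  have hpt : ∀ z, majorant μ x a γ z * majorant μ y b γ z ≤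
      B * (majorant μ x a γ z + majorant μ y b γ z) := by
    intro z
    have htri := dist_triangle_right x y z
    rcases le_total (a + dist x z) (b + dist y z) with h | h
    · have hy : majorant μ y b γ z ≤ B :=
        majorant_le_of_le_two_mul hb hd hb0 le_rfl hγ.le (by linarith) (by linarith)
      calc majorant μ x a γ z * majorant μ y b γ z ≤ B * majorant μ x a γ z := by
            rw [mul_comm]; exact mul_le_mul' hy le_rfl
        _ ≤ _ := mul_le_mul' le_rfl le_self_add
    · have hx : majorant μ x a γ z ≤ B :=
        majorant_le_of_le_two_mul hb hd ha hab hγ.le (by simp; positivity) (by linarith)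
      calc majorant μ x a γ z * majorant μ y b γ z ≤ B * majorant μ y b γ z :=
            mul_le_mul' hx le_rfl
        _ ≤ _ := mul_le_mul' le_rfl le_add_self
  calc ∫⁻ z, majorant μ x a γ z * majorant μ y b γ z ∂μ
      ≤ ∫⁻ z, B * (majorant μ x a γ z + majorant μ y b γ z) ∂μ := lintegral_mono hpt
    _ = B * ∫⁻ z, (majorant μ x a γ z + majorant μ y b γ z) ∂μ :=
        lintegral_const_mul B ((measurable_majorant x a γ).add (measurable_majorant y b γ))
    _ = B * ((∫⁻ z, majorant μ x a γ z ∂μ) + ∫⁻ z, majorant μ y b γ z ∂μ) := by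
        rw [lintegral_add_left (measurable_majorant x a γ)]
    _ ≤ B * (κ₀ + κ₀) := mul_le_mul' le_rfl (add_le_add (hint x a ha) (hint y b hb0))
    _ = c * (κ₀ + κ₀) * majorant μ x b γ y := by ring

theorem exists_lintegral_norm_mul_le [OpensMeasurableSpace X] (hb : BallsFinitePos μ)
    (hd : Doubling μ C₁ n) (A : ℝ) {γ : ℝ} (hγ : 0 < γ) :
    ∃ κ : ℝ≥0∞, κ ≠ ∞ ∧ ∀ (a b : ℝ) (S T : X → X → ℂ), 0 < a → a ≤ b →
      SizeBound μ A a γ S → SizeBound μ A b γ T → ∀ x y : X,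
        ∫⁻ z, ENNReal.ofReal ‖S x z * T z y‖ ∂μ ≤ κ * majorant μ x b γ y := by
  obtain ⟨κ, hκ, hconv⟩ := exists_lintegral_majorant_mul_majorant_le hb hd hγ
  set MS := ENNReal.ofReal A * ENNReal.ofReal (C₁ * 2 ^ n)
  set MT := MS * (ENNReal.ofReal (C₁ * 4 ^ n) * ENNReal.ofReal (2 ^ γ))
  refine ⟨MS * MT * κ, by finiteness, fun a b S T ha hab hS hT x y => ?_⟩
  have hpt : ∀ z, ENNReal.ofReal ‖S x z * T z y‖ ≤
      MS * MT * (majorant μ x a γ z * majorant μ y b γ z) := by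
    intro z
    rw [norm_mul, ENNReal.ofReal_mul (norm_nonneg _), mul_mul_mul_comm]
    exact mul_le_mul'
      ((ENNReal.ofReal_le_ofReal (hS x z)).trans (ofReal_mul_sz_le_majorant hb hd A ha γ))
      ((ENNReal.ofReal_le_ofReal (hT z y)).trans
        (ofReal_mul_sz_le_majorant_swap hb hd A (ha.trans_le hab) hγ.le))
  calc ∫⁻ z, ENNReal.ofReal ‖S x z * T z y‖ ∂μ
      ≤ ∫⁻ z, MS * MT * (majorant μ x a γ z * majorant μ y b γ z) ∂μ := lintegral_mono hpt
    _ = MS * MT * ∫⁻ z, majorant μ x a γ z * majorant μ y b γ z ∂μ :=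
        lintegral_const_mul' _ _ (by finiteness)
    _ ≤ MS * MT * (κ * majorant μ x b γ y) := mul_le_mul' le_rfl (hconv a b x y ha hab)
    _ = MS * MT * κ * majorant μ x b γ y := (mul_assoc _ _ _).symm

theorem rpow_div_le_two_rpow_mul {h t R ε : ℝ} (hh : 0 ≤ h) (ht : 0 < t) (hR : 0 < R)
    (hRt : R ≤ 2 * t) (hε : 0 ≤ ε) : (h / t) ^ ε ≤ 2 ^ ε * (h / R) ^ ε := by
  rw [← Real.mul_rpow (by norm_num) (by positivity)]
  refine Real.rpow_le_rpow (by positivity) ?_ hε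
  rw [← mul_div_assoc, div_le_div_iff₀ ht hR]
  nlinarith

theorem majorant_add_majorant_le_of_dist_le (hb : BallsFinitePos μ) (hd : Doubling μ C₁ n)
    {x y y' z : X} {b γ ε : ℝ} (hb0 : 0 < b) (hγ : 0 ≤ γ) (hε : 0 ≤ ε) (hxy : dist x y ≤ b)
    (hyy' : dist y y' ≤ b) :
    majorant μ y b γ z + majorant μ y' b γ z ≤
      2 * ENNReal.ofReal (C₁ * 4 ^ n) * ENNReal.ofReal (2 ^ ε) * majorant μ x b ε y := by
  set R := b + dist x y
  have hR : 0 < R := by positivity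
  have hball : ∀ w, dist x w ≤ 2 * b →
      majorant μ w b γ z ≤ ENNReal.ofReal (C₁ * 4 ^ n) * (μ (ball x R))⁻¹ := fun w hw =>
    (majorant_le_inv_measure_ball hb0 hγ).trans
      (inv_measure_ball_le_of_add_dist_le hb hd hR hb0 (by norm_num) (by linarith))
  have hinv : (μ (ball x R))⁻¹ ≤ ENNReal.ofReal (2 ^ ε) * majorant μ x b ε y := by
    rw [majorant, mul_left_comm]
    refine le_mul_of_one_le_right' ?_
    rw [← ENNReal.ofReal_mul (by positivity), ← Real.mul_rpow (by norm_num) (by positivity)]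
    refine ENNReal.one_le_ofReal.2 (Real.one_le_rpow ?_ hε)
    rw [← mul_div_assoc, le_div_iff₀ hR]
    linarith
  calc majorant μ y b γ z + majorant μ y' b γ z
      ≤ 2 * (ENNReal.ofReal (C₁ * 4 ^ n) * (μ (ball x R))⁻¹) := by
        rw [two_mul]
        exact add_le_add (hball y (by linarith))
          (hball y' (by linarith [dist_triangle x y y']))
    _ ≤ 2 * (ENNReal.ofReal (C₁ * 4 ^ n) * (ENNReal.ofReal (2 ^ ε) * majorant μ x b ε y)) := by
        gcongr
    _ = _ := by ring

theorem exists_lintegral_norm_mul_sub_le_of_dist_le [OpensMeasurableSpace X]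
    (hb : BallsFinitePos μ) (hd : Doubling μ C₁ n) {A β γ ε : ℝ} (hA : 0 ≤ A) (hγ : 0 < γ)
    (hε : 0 ≤ ε) (hεβ : ε ≤ β) :
    ∃ κ : ℝ≥0∞, κ ≠ ∞ ∧ ∀ (a b : ℝ) (S T : X → X → ℂ) (x y y' : X), 0 < a → a ≤ b →
      SizeBound μ A a γ S → SizeBound μ A b γ T → HolderSndBound μ A b β γ T →
      dist x y ≤ b → dist y y' ≤ (b + dist x y) / 2 →
        ∫⁻ z, ENNReal.ofReal ‖S x z * (T z y - T z y')‖ ∂μ ≤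
          κ * ENNReal.ofReal ((dist y y' / (b + dist x y)) ^ ε) * majorant μ x b ε y := by
  obtain ⟨κT, hκT, hdiff⟩ := exists_ofReal_norm_sub_le_majorant hb hd hA hγ.le hε hεβ
  obtain ⟨κ₀, hκ₀, hint⟩ := lintegral_majorant_le hb hd hγ
  set MS := ENNReal.ofReal A * ENNReal.ofReal (C₁ * 2 ^ n)
  set D := κT * ENNReal.ofReal (2 ^ ε) *
    (2 * ENNReal.ofReal (C₁ * 4 ^ n) * ENNReal.ofReal (2 ^ ε))
  refine ⟨κ₀ * MS * D, by finiteness, ?_⟩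
  intro a b S T x y y' ha hab hS hT hTh hxy hyy'
  have hb0 : 0 < b := ha.trans_le hab
  set R := b + dist x y
  set H := ENNReal.ofReal ((dist y y' / R) ^ ε)
  have hΔ : ∀ z, ENNReal.ofReal ‖T z y - T z y'‖ ≤ D * H * majorant μ x b ε y := by
    intro z
    have hratio : ENNReal.ofReal ((dist y y' / (b + dist z y)) ^ ε) ≤
        ENNReal.ofReal (2 ^ ε) * H := by
      rw [← ENNReal.ofReal_mul (by positivity)]
      exact ENNReal.ofReal_le_ofReal (rpow_div_le_two_rpow_mul dist_nonneg (by positivity)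
        (by positivity) (by linarith [dist_nonneg (x := z) (y := y)]) hε)
    calc ENNReal.ofReal ‖T z y - T z y'‖
        ≤ κT * ENNReal.ofReal ((dist y y' / (b + dist z y)) ^ ε) *
            (majorant μ y b γ z + majorant μ y' b γ z) := hdiff b T hb0 hT hTh z y y'
      _ ≤ κT * (ENNReal.ofReal (2 ^ ε) * H) * (2 * ENNReal.ofReal (C₁ * 4 ^ n) *
            ENNReal.ofReal (2 ^ ε) * majorant μ x b ε y) := by
          gcongr
          exact majorant_add_majorant_le_of_dist_le hb hd hb0 hγ.le hε hxy (by linarith)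
      _ = D * H * majorant μ x b ε y := by ring
  calc ∫⁻ z, ENNReal.ofReal ‖S x z * (T z y - T z y')‖ ∂μ
      ≤ ∫⁻ z, majorant μ x a γ z * (MS * (D * H * majorant μ x b ε y)) ∂μ := by
        refine lintegral_mono fun z => ?_
        rw [norm_mul, ENNReal.ofReal_mul (norm_nonneg _), ← mul_assoc,
          mul_comm (majorant _ _ _ _ _)]
        exact mul_le_mul' ((ENNReal.ofReal_le_ofReal (hS x z)).trans
          (ofReal_mul_sz_le_majorant hb hd A ha γ)) (hΔ z)
    _ = (∫⁻ z, majorant μ x a γ z ∂μ) * (MS * (D * H * majorant μ x b ε y)) :=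
        lintegral_mul_const _ (measurable_majorant x a γ)
    _ ≤ κ₀ * (MS * (D * H * majorant μ x b ε y)) := mul_le_mul' (hint x a ha) le_rfl
    _ = κ₀ * MS * D * H * majorant μ x b ε y := by ring

/-- Near `y` the Hölder regularity of `S` in its second variable is traded against the decay of
`(h / (b + d(z,y)))^ε`; away from `y` that factor is already of order `(h / (b + d(x,y)))^ε`. -/
theorem norm_sub_mul_rpow_le_of_le_two_mul {A a b β γ ε h : ℝ} {S : X → X → ℂ}
    (hS : SizeBound μ A a γ S) (hSh : HolderSndBound μ A a β γ S) (hA : 0 ≤ A) (ha : 0 < a)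
    (hb : 0 < b) (hε : 0 ≤ ε) (hεβ : ε ≤ β) (hh : 0 ≤ h) {x y : X}
    (hfar : b + dist x y ≤ 2 * (a + dist x y)) (z : X) :
    ‖S x z - S x y‖ * (h / (b + dist z y)) ^ ε ≤
      2 ^ ε * (h / (b + dist x y)) ^ ε * (A * sz μ x z a γ + A * sz μ x y a γ) := by
  set q := a + dist x y
  set R := b + dist x y
  set m := dist z y
  set t := b + m
  have hq : 0 < q := by positivity
  have hR : 0 < R := by positivity
  have ht : 0 < t := by positivity
  have hSz := mul_nonneg hA (sz_nonneg μ x z ha.le γ)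
  have hSy := mul_nonneg hA (sz_nonneg μ x y ha.le γ)
  rcases le_or_gt m (q / 2) with hm | hm
  · have hdiff : ‖S x z - S x y‖ ≤ (m / q) ^ ε * (A * sz μ x y a γ) := by
      rw [norm_sub_rev]
      calc ‖S x y - S x z‖ ≤ A * (m / q) ^ β * sz μ x y a γ := by
            simpa only [dist_comm y z] using hSh x y z (by rw [dist_comm]; exact hm)
        _ ≤ A * (m / q) ^ ε * sz μ x y a γ := by
            refine mul_le_mul_of_nonneg_right (mul_le_mul_of_nonneg_left ?_ hA)
              (sz_nonneg μ x y ha.le γ)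
            exact Real.rpow_le_rpow_of_exponent_ge' (by positivity)
              ((div_le_one hq).2 (by linarith)) hε hεβ
        _ = (m / q) ^ ε * (A * sz μ x y a γ) := by ring
    have hmt : (m / q) ^ ε * (h / t) ^ ε ≤ 2 ^ ε * (h / R) ^ ε := by
      rw [← Real.mul_rpow (by positivity) (by positivity)]
      refine (Real.rpow_le_rpow (by positivity) ?_ hε).trans
        (rpow_div_le_two_rpow_mul hh hq hR (by linarith) hε)
      rw [div_mul_div_comm, mul_comm m, ← div_mul_div_comm]
      exact mul_le_of_le_one_right (by positivity)
        ((div_le_one ht).2 (by linarith [hb]))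
    calc ‖S x z - S x y‖ * (h / t) ^ ε
        ≤ (m / q) ^ ε * (A * sz μ x y a γ) * (h / t) ^ ε := by gcongr
      _ = (m / q) ^ ε * (h / t) ^ ε * (A * sz μ x y a γ) := by ring
      _ ≤ 2 ^ ε * (h / R) ^ ε * (A * sz μ x y a γ) := by gcongr
      _ ≤ _ := by gcongr; linarith
  · calc ‖S x z - S x y‖ * (h / t) ^ ε
        ≤ (A * sz μ x z a γ + A * sz μ x y a γ) * (2 ^ ε * (h / R) ^ ε) := by
          gcongr
          · exact (norm_sub_le _ _).trans (add_le_add (hS x z) (hS x y))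
          · exact rpow_div_le_two_rpow_mul hh ht hR
              (by linarith [dist_nonneg (x := x) (y := y)]) hε
      _ = _ := by ring

theorem exists_lintegral_majorant_add_mul_le [OpensMeasurableSpace X] (hb : BallsFinitePos μ)
    (hd : Doubling μ C₁ n) {γ : ℝ} (hγ : 0 < γ) :
    ∃ κ : ℝ≥0∞, κ ≠ ∞ ∧ ∀ (a b : ℝ) (x y y' : X), 0 < a → a ≤ b →
      b + dist x y ≤ 2 * (a + dist x y) → b + dist x y ≤ 2 * (b + dist x y') →
        ∫⁻ z, (majorant μ x a γ z + majorant μ x a γ y) *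
          (majorant μ y b γ z + majorant μ y' b γ z) ∂μ ≤ κ * majorant μ x b γ y := by
  obtain ⟨κc, hκc, hconv⟩ := exists_lintegral_majorant_mul_majorant_le hb hd hγ
  obtain ⟨κ₀, hκ₀, hint⟩ := lintegral_majorant_le hb hd hγ
  set c := ENNReal.ofReal (C₁ * 4 ^ n) * ENNReal.ofReal (2 ^ γ)
  refine ⟨κc + κc * c + c * (κ₀ + κ₀), by finiteness, ?_⟩
  intro a b x y y' ha hab hfar hy'
  have hb0 : 0 < b := ha.trans_le hab
  have hmy' : majorant μ x b γ y' ≤ c * majorant μ x b γ y :=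
    majorant_le_of_le_two_mul hb hd hb0 le_rfl hγ.le (by simp; positivity) hy'
  have hmy : majorant μ x a γ y ≤ c * majorant μ x b γ y :=
    majorant_le_of_le_two_mul hb hd ha hab hγ.le (by simp; positivity) hfar
  have hm := measurable_majorant (μ := μ)
  have hm₁ : Measurable fun z => majorant μ x a γ z * majorant μ y b γ z :=
    (hm x a γ).mul (hm y b γ)
  have hm₂ : Measurable fun z => majorant μ x a γ z * majorant μ y b γ z +
      majorant μ x a γ z * majorant μ y' b γ z := hm₁.add ((hm x a γ).mul (hm y' b γ))
  have hm₃ : Measurable fun z => majorant μ y b γ z + majorant μ y' b γ z :=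
    (hm y b γ).add (hm y' b γ)
  calc ∫⁻ z, (majorant μ x a γ z + majorant μ x a γ y) *
        (majorant μ y b γ z + majorant μ y' b γ z) ∂μ
      = ∫⁻ z, (majorant μ x a γ z * majorant μ y b γ z +
          majorant μ x a γ z * majorant μ y' b γ z +
          majorant μ x a γ y * (majorant μ y b γ z + majorant μ y' b γ z)) ∂μ := by
        congr 1; ext z; ring
    _ = (∫⁻ z, majorant μ x a γ z * majorant μ y b γ z ∂μ) +
          (∫⁻ z, majorant μ x a γ z * majorant μ y' b γ z ∂μ) +
          majorant μ x a γ y *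
            ((∫⁻ z, majorant μ y b γ z ∂μ) + ∫⁻ z, majorant μ y' b γ z ∂μ) := by
        rw [lintegral_add_left hm₂, lintegral_add_left hm₁, lintegral_const_mul _ hm₃,
          lintegral_add_left (hm y b γ)]
    _ ≤ κc * majorant μ x b γ y + κc * (c * majorant μ x b γ y) +
          c * majorant μ x b γ y * (κ₀ + κ₀) := by
        gcongr
        · exact hconv a b x y ha hab
        · exact (hconv a b x y' ha hab).trans (mul_le_mul' le_rfl hmy')
        · exact hint y b hb0
        · exact hint y' b hb0
    _ = (κc + κc * c + c * (κ₀ + κ₀)) * majorant μ x b γ y := by ring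

theorem exists_lintegral_norm_sub_mul_sub_le [OpensMeasurableSpace X]
    (hb : BallsFinitePos μ) (hd : Doubling μ C₁ n) {A β γ ε : ℝ} (hA : 0 ≤ A) (hγ : 0 < γ)
    (hε : 0 ≤ ε) (hεβ : ε ≤ β) (hεγ : ε ≤ γ) :
    ∃ κ : ℝ≥0∞, κ ≠ ∞ ∧ ∀ (a b : ℝ) (S T : X → X → ℂ) (x y y' : X), 0 < a → a ≤ b →
      SizeBound μ A a γ S → HolderSndBound μ A a β γ S →
      SizeBound μ A b γ T → HolderSndBound μ A b β γ T →
      b + dist x y ≤ 2 * (a + dist x y) → dist y y' ≤ (b + dist x y) / 2 →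
        ∫⁻ z, ENNReal.ofReal ‖(S x z - S x y) * (T z y - T z y')‖ ∂μ ≤
          κ * ENNReal.ofReal ((dist y y' / (b + dist x y)) ^ ε) * majorant μ x b ε y := by
  obtain ⟨κT, hκT, hdiff⟩ := exists_ofReal_norm_sub_le_majorant hb hd hA hγ.le hε hεβ
  obtain ⟨κI, hκI, hint⟩ := exists_lintegral_majorant_add_mul_le hb hd hγ
  set MS := ENNReal.ofReal A * ENNReal.ofReal (C₁ * 2 ^ n)
  refine ⟨κT * ENNReal.ofReal (2 ^ ε) * MS * κI, by finiteness, ?_⟩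
  intro a b S T x y y' ha hab hS hSh hT hTh hfar hyy'
  have hb0 : 0 < b := ha.trans_le hab
  set R := b + dist x y
  set H := ENNReal.ofReal ((dist y y' / R) ^ ε)
  set K := κT * ENNReal.ofReal (2 ^ ε) * MS * H
  have hpt : ∀ z, ENNReal.ofReal ‖(S x z - S x y) * (T z y - T z y')‖ ≤
      K * ((majorant μ x a γ z + majorant μ x a γ y) *
        (majorant μ y b γ z + majorant μ y' b γ z)) := by
    intro z
    have hS' := norm_sub_mul_rpow_le_of_le_two_mul hS hSh hA ha hb0 hε hεβ
      (dist_nonneg (x := y) (y := y')) hfar z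
    calc ENNReal.ofReal ‖(S x z - S x y) * (T z y - T z y')‖
        ≤ ENNReal.ofReal ‖S x z - S x y‖ * (κT *
            ENNReal.ofReal ((dist y y' / (b + dist z y)) ^ ε) *
            (majorant μ y b γ z + majorant μ y' b γ z)) := by
          rw [norm_mul, ENNReal.ofReal_mul (norm_nonneg _)]
          exact mul_le_mul' le_rfl (hdiff b T hb0 hT hTh z y y')
      _ = κT * ENNReal.ofReal (‖S x z - S x y‖ * (dist y y' / (b + dist z y)) ^ ε) *
            (majorant μ y b γ z + majorant μ y' b γ z) := by
          rw [ENNReal.ofReal_mul (norm_nonneg _)]; ring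
      _ ≤ κT * (ENNReal.ofReal (2 ^ ε) * H *
            (ENNReal.ofReal (A * sz μ x z a γ) + ENNReal.ofReal (A * sz μ x y a γ))) *
            (majorant μ y b γ z + majorant μ y' b γ z) := by
          gcongr
          refine (ENNReal.ofReal_le_ofReal hS').trans ?_
          rw [ENNReal.ofReal_mul (by positivity), ENNReal.ofReal_mul (by positivity)]
          exact mul_le_mul' le_rfl ENNReal.ofReal_add_le
      _ ≤ κT * (ENNReal.ofReal (2 ^ ε) * H *
            (MS * majorant μ x a γ z + MS * majorant μ x a γ y)) *
            (majorant μ y b γ z + majorant μ y' b γ z) := by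
          gcongr <;> exact ofReal_mul_sz_le_majorant hb hd A ha γ
      _ = _ := by ring
  calc ∫⁻ z, ENNReal.ofReal ‖(S x z - S x y) * (T z y - T z y')‖ ∂μ
      ≤ ∫⁻ z, K * ((majorant μ x a γ z + majorant μ x a γ y) *
          (majorant μ y b γ z + majorant μ y' b γ z)) ∂μ := lintegral_mono hpt
    _ = K * ∫⁻ z, (majorant μ x a γ z + majorant μ x a γ y) *
          (majorant μ y b γ z + majorant μ y' b γ z) ∂μ := lintegral_const_mul' _ _ (by finiteness)
    _ ≤ K * (κI * majorant μ x b ε y) := by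
        refine mul_le_mul' le_rfl ((hint a b x y y' ha hab hfar ?_).trans
          (mul_le_mul' le_rfl (majorant_le_of_exponent_le hb0 hεγ)))
        linarith [dist_triangle x y' y, dist_comm y y']
    _ = κT * ENNReal.ofReal (2 ^ ε) * MS * κI * H * majorant μ x b ε y := by ring

theorem integral_mul_sub_integral_mul_eq {α 𝕜 : Type*} [MeasurableSpace α] [RCLike 𝕜]
    {ν : Measure α} {f g g' : α → 𝕜} {M : ℝ} (hf : AEStronglyMeasurable f ν)
    (hfM : ∀ z, ‖f z‖ ≤ M) (hg : Integrable g ν) (hg' : Integrable g' ν)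
    (hgg' : ∫ z, g z ∂ν = ∫ z, g' z ∂ν) (c : 𝕜) :
    (∫ z, f z * g z ∂ν) - ∫ z, f z * g' z ∂ν = ∫ z, (f z - c) * (g z - g' z) ∂ν := by
  have hfg := hg.bdd_mul hf (ae_of_all _ hfM)
  have hfg' := hg'.bdd_mul hf (ae_of_all _ hfM)
  calc (∫ z, f z * g z ∂ν) - ∫ z, f z * g' z ∂ν
      = (∫ z, (f z * g z - f z * g' z) ∂ν) - c * ((∫ z, g z ∂ν) - ∫ z, g' z ∂ν) := by
        rw [hgg', sub_self, mul_zero, sub_zero, integral_sub hfg hfg']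
    _ = ∫ z, ((f z * g z - f z * g' z) - c * (g z - g' z)) ∂ν := by
        rw [integral_sub (f := fun z => f z * g z - f z * g' z)
          (g := fun z => c * (g z - g' z)) (hfg.sub hfg') ((hg.sub hg').const_mul c),
          integral_const_mul, integral_sub hg hg']
    _ = ∫ z, (f z - c) * (g z - g' z) ∂ν := by congr 1; ext z; ring

theorem exists_ofReal_norm_sub_integral_mul_le [OpensMeasurableSpace X]
    (hb : BallsFinitePos μ) (hd : Doubling μ C₁ n) {A β γ ε : ℝ} (hA : 0 ≤ A) (hγ : 0 < γ)
    (hε : 0 ≤ ε) (hεβ : ε ≤ β) (hεγ : ε ≤ γ) :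
    ∃ κ : ℝ≥0∞, κ ≠ ∞ ∧ ∀ (a b : ℝ) (S T : X → X → ℂ) (x y y' : X), 0 < a → a ≤ b →
      Measurable (Function.uncurry S) → SizeBound μ A a γ S → HolderSndBound μ A a β γ S →
      SizeBound μ A b γ T → HolderSndBound μ A b β γ T → (∀ w, ∫ z, T z w ∂μ = 1) →
      dist y y' ≤ (b + dist x y) / 2 →
        ENNReal.ofReal ‖(∫ z, S x z * T z y ∂μ) - ∫ z, S x z * T z y' ∂μ‖ ≤
          κ * ENNReal.ofReal ((dist y y' / (b + dist x y)) ^ ε) * majorant μ x b ε y := by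
  obtain ⟨κL, hκL, hlocal⟩ := exists_lintegral_norm_mul_sub_le_of_dist_le hb hd hA hγ hε hεβ
  obtain ⟨κF, hκF, hfar⟩ := exists_lintegral_norm_sub_mul_sub_le hb hd hA hγ hε hεβ hεγ
  refine ⟨κL + κF, by finiteness, ?_⟩
  intro a b S T x y y' ha hab hSm hS hSh hT hTh hT1 hyy'
  have hTint : ∀ w, Integrable (T · w) μ := fun w =>
    Integrable.of_integral_ne_zero (by rw [hT1 w]; exact one_ne_zero)
  have hcancel := integral_mul_sub_integral_mul_eq (f := S x)
    (hSm.comp measurable_prodMk_left).aestronglyMeasurable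
    (fun z => (hS x z).trans (mul_le_mul_of_nonneg_left (sz_le_inv_vol hb ha hγ.le) hA))
    (hTint y) (hTint y') (by rw [hT1, hT1])
  rcases le_or_gt (b + dist x y) (2 * (a + dist x y)) with hle | hgt
  · rw [hcancel (S x y)]
    refine (ENNReal.ofReal_le_of_le_toReal (norm_integral_le_lintegral_norm _)).trans
      ((hfar a b S T x y y' ha hab hS hSh hT hTh hle hyy').trans ?_)
    gcongr
    exact le_add_self
  · rw [hcancel 0]
    simp only [sub_zero]
    refine (ENNReal.ofReal_le_of_le_toReal (norm_integral_le_lintegral_norm _)).trans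
      ((hlocal a b S T x y y' ha hab hS hT hTh (by linarith) hyy').trans ?_)
    gcongr
    exact le_self_add

theorem composition_kernel_test_norm_general
    {X : Type*} [MetricSpace X] [MeasurableSpace X] [BorelSpace X]
    (μ : Measure X) (C₁ n : ℝ)
    (hballs : BallsFinitePos μ) (hdoub : Doubling μ C₁ n)
    (ε₁ ε₂ A : ℝ) (hA : 0 < A)
    (ε : ℝ) (hε : 0 < ε ∧ ε < min ε₁ ε₂) :
    ∃ C : ℝ, 0 < C ∧ ∀ k l : ℤ, l ≤ k → ∀ S T : X → X → ℂ,
      Measurable (Function.uncurry S) → Measurable (Function.uncurry T) →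
      (∀ x y : X, ‖S x y‖ ≤ A * sz μ x y (sc k) ε₂) →
      (∀ x x' y : X, dist x x' ≤ (sc k + dist x y) / 2 →
        ‖S x y - S x' y‖ ≤ A * (dist x x' / (sc k + dist x y)) ^ ε₁ * sz μ x y (sc k) ε₂) →
      (∀ x y y' : X, dist y y' ≤ (sc k + dist x y) / 2 →
        ‖S x y - S x y'‖ ≤ A * (dist y y' / (sc k + dist x y)) ^ ε₁ * sz μ x y (sc k) ε₂) →
      (∀ x : X, (∫ z, S x z ∂μ) = 1) → (∀ y : X, (∫ z, S z y ∂μ) = 1) →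
      (∀ x y : X, ‖T x y‖ ≤ A * sz μ x y (sc l) ε₂) →
      (∀ x x' y : X, dist x x' ≤ (sc l + dist x y) / 2 →
        ‖T x y - T x' y‖ ≤ A * (dist x x' / (sc l + dist x y)) ^ ε₁ * sz μ x y (sc l) ε₂) →
      (∀ x y y' : X, dist y y' ≤ (sc l + dist x y) / 2 →
        ‖T x y - T x y'‖ ≤ A * (dist y y' / (sc l + dist x y)) ^ ε₁ * sz μ x y (sc l) ε₂) →
      (∀ x : X, (∫ z, T x z ∂μ) = 1) → (∀ y : X, (∫ z, T z y ∂μ) = 1) →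
      ∀ x : X, TestBound μ x (sc l) ε ε (fun y => ∫ z, S x z * T z y ∂μ) C := by
  obtain ⟨hε0, hεmin⟩ := hε
  have hεβ : ε ≤ ε₁ := (hεmin.trans_le (min_le_left _ _)).le
  have hεγ : ε < ε₂ := hεmin.trans_le (min_le_right _ _)
  have hγ : 0 < ε₂ := hε0.trans hεγ
  obtain ⟨κs, hκs, hsize⟩ := exists_lintegral_norm_mul_le hballs hdoub A hγ
  obtain ⟨κh, hκh, hholder⟩ :=
    exists_ofReal_norm_sub_integral_mul_le hballs hdoub hA.le hγ hε0.le hεβ hεγ.le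
  have hC : ∀ κ ≤ κs + κh, 2 * κ.toReal ≤ 2 * (κs + κh).toReal + 1 := fun κ hκ => by
    linarith [ENNReal.toReal_mono (by finiteness) hκ]
  refine ⟨2 * (κs + κh).toReal + 1, by positivity, ?_⟩
  intro k l hlk S T hSm _ hS _ hSh _ _ hT _ hTh _ hT1 x
  have hk : 0 < sc k := zpow_pos two_pos _
  have hkl : sc k ≤ sc l := zpow_le_zpow_right₀ one_le_two (neg_le_neg hlk)
  have hl : 0 < sc l := hk.trans_le hkl
  refine ⟨fun y => ?_, fun y y' hyy' => ?_⟩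
  · have hU : ENNReal.ofReal ‖∫ z, S x z * T z y ∂μ‖ ≤
        κs * ENNReal.ofReal 1 * majorant μ x (sc l) ε y := by
      rw [ENNReal.ofReal_one, mul_one]
      exact (ENNReal.ofReal_le_of_le_toReal (norm_integral_le_lintegral_norm _)).trans
        ((hsize _ _ S T hk hkl hS hT x y).trans
          (mul_le_mul' le_rfl (majorant_le_of_exponent_le hl hεγ.le)))
    simpa using le_mul_sz_of_ofReal_le hballs hl hκs zero_le_one (hC κs le_self_add) hU
  · exact le_mul_sz_of_ofReal_le hballs hl hκh (by positivity) (hC κh le_add_self)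
      (hholder _ _ S T x y y' hk hkl hSm hS hSh hT hTh hT1 hyy')

/-- Test-norm bound for the composition of two AOTI-type kernels at scales `2^{-k}` and
`2^{-ℓ}` with `k ≥ ℓ` (used for `I₂` in the proof of Theorem 3.3): the kernel
`U(x,y) = ∫ S(x,z) T(z,y) dμ(z)` satisfies `‖U(x,·)‖_{G(x, 2^{-ℓ}, ε, ε)} ≤ C` uniformly. -/
theorem composition_kernel_test_norm
    {X : Type*} [MetricSpace X] [MeasurableSpace X] [BorelSpace X]
    (μ : Measure X) (C₁ n : ℝ) (hC₁ : 1 ≤ C₁) (hn : 0 < n)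
    (hballs : BallsFinitePos μ) (hdoub : Doubling μ C₁ n)
    (ε₁ ε₂ A : ℝ) (hε₁ : 0 < ε₁ ∧ ε₁ ≤ 1) (hε₂ : 0 < ε₂) (hA : 0 < A)
    (ε : ℝ) (hε : 0 < ε ∧ ε < min ε₁ ε₂) :
    ∃ C : ℝ, 0 < C ∧ ∀ k l : ℤ, l ≤ k → ∀ S T : X → X → ℂ,
      Measurable (Function.uncurry S) → Measurable (Function.uncurry T) →
      (∀ x y : X, ‖S x y‖ ≤ A * sz μ x y (sc k) ε₂) →
      (∀ x x' y : X, dist x x' ≤ (sc k + dist x y) / 2 →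
        ‖S x y - S x' y‖ ≤ A * (dist x x' / (sc k + dist x y)) ^ ε₁ * sz μ x y (sc k) ε₂) →
      (∀ x y y' : X, dist y y' ≤ (sc k + dist x y) / 2 →
        ‖S x y - S x y'‖ ≤ A * (dist y y' / (sc k + dist x y)) ^ ε₁ * sz μ x y (sc k) ε₂) →
      (∀ x : X, (∫ z, S x z ∂μ) = 1) → (∀ y : X, (∫ z, S z y ∂μ) = 1) →
      (∀ x y : X, ‖T x y‖ ≤ A * sz μ x y (sc l) ε₂) →
      (∀ x x' y : X, dist x x' ≤ (sc l + dist x y) / 2 →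
        ‖T x y - T x' y‖ ≤ A * (dist x x' / (sc l + dist x y)) ^ ε₁ * sz μ x y (sc l) ε₂) →
      (∀ x y y' : X, dist y y' ≤ (sc l + dist x y) / 2 →
        ‖T x y - T x y'‖ ≤ A * (dist y y' / (sc l + dist x y)) ^ ε₁ * sz μ x y (sc l) ε₂) →
      (∀ x : X, (∫ z, T x z ∂μ) = 1) → (∀ y : X, (∫ z, T z y ∂μ) = 1) →
      ∀ x : X, TestBound μ x (sc l) ε ε (fun y => ∫ z, S x z * T z y ∂μ) C :=
  composition_kernel_test_norm_general μ C₁ n hballs hdoub ε₁ ε₂ A hA ε hε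

end RDHardy
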